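/- Every element s of S(λ), for λ = Σ k_i ω_i, decomposes as a sum s = Σ_{i=1}^n Σ_{j=1}^{k_i} m_{i,j} with each m_{i,j} ∈ S(ω_i); i.e., the polytope family P(λ) has the integral Minkowski sum property with respect to fundamental weights. -/

import Mathlib

open Finset

/-- `(p,q)` indexes the positive root `α_p + ⋯ + α_q` of type `A_n`. -/
abbrev IsRoot (n p q : ℕ) : Prop := 1 ≤ p ∧ p ≤ q ∧ q ≤ n

/-- One step in a Dyck path: `α_{p,q} → α_{p,q+1}` or `α_{p,q} → α_{p+1,q}`. -/
abbrev RootStep (a b : ℕ × ℕ) : Prop := b = (a.1, a.2 + 1) ∨ b = (a.1 + 1, a.2)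

/-- A Dyck path, recorded as the list of index pairs of its roots.  The first
and last entries are simple roots, and each step follows the recursion rule. -/
def IsDyckPath (n : ℕ) (L : List (ℕ × ℕ)) : Prop :=
  L ≠ [] ∧ (∀ a ∈ L, IsRoot n a.1 a.2) ∧
  (L.head!).1 = (L.head!).2 ∧ (L.getLast!).1 = (L.getLast!).2 ∧
  L.Chain' RootStep

/-- A multi-exponent: a tuple of nonnegative integers supported on the
positive roots of `A_n`. -/
def IsMultiExp (n : ℕ) (s : ℕ × ℕ → ℕ) : Prop := ∀ p q, ¬ IsRoot n p q → s (p, q) = 0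

/-- `s ∈ S(λ)` for `λ = Σ_{i=1}^n m i · ω_i` : for every Dyck path from
`α_i` to `α_j` the sum of the entries of `s` along the path is at most
`m_i + ⋯ + m_j`. -/
def InS (n : ℕ) (m : ℕ → ℕ) (s : ℕ × ℕ → ℕ) : Prop :=
  IsMultiExp n s ∧
  ∀ L : List (ℕ × ℕ), IsDyckPath n L →
    (L.map s).sum ≤ ∑ t ∈ Finset.Icc (L.head!).1 (L.getLast!).1, m t

/-!
Induction on `m 1 + ⋯ + m n`. Let `i` be the least index with `m i ≠ 0` and call a root
`(p, q)` straddling if `p ≤ i ≤ q` and `s (p, q) ≠ 0`. The indicator `t` of the straddling roots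
that are minimal for the componentwise order lies in `S(ω_i)`: a Dyck path is a chain, so it
meets at most one of them, and only if its interval contains `i`. And `s - t ∈ S(λ - ω_i)`:
a path whose interval contains `i` but which avoids all minimal straddling roots has slack at
least one. The part of such a path before its first straddling root `x` (or, if there is none,
before it leaves the rows `≤ i`) carries no mass, because `m` vanishes below `i`. Replacing that
part by a hook from a straddling root `y < x` (resp. from `α_{i+1}`) gives a Dyck path with the
same bound but the extra mass `s y ≥ 1` (resp. with a bound smaller by `m i ≥ 1`).
-/

lemma List.exists_eq_append_cons_of_exists {α : Type*} {p : α → Prop} [DecidablePred p]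
    {L : List α} (h : ∃ x ∈ L, p x) : ∃ P x S, L = P ++ x :: S ∧ p x ∧ ∀ r ∈ P, ¬ p r := by
  obtain ⟨x, hx⟩ := Option.isSome_iff_exists.mp
    (List.find?_isSome (p := fun r => decide (p r)) |>.mpr (by simpa using h))
  obtain ⟨hpx, P, S, rfl, hP⟩ := List.find?_eq_some_iff_append.mp hx
  exact ⟨P, x, S, rfl, by simpa using hpx, fun r hr => by simpa using hP r hr⟩

lemma sum_map_ite_le_one {α : Type*} {Q : α → Prop} [DecidablePred Q] :
    ∀ {L : List α}, L.Pairwise (fun a b => ¬ (Q a ∧ Q b)) →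
      (L.map fun r => if Q r then 1 else 0).sum ≤ 1
  | [], _ => by simp
  | a :: L, h => by
    obtain ⟨ha, hL⟩ := List.pairwise_cons.mp h
    by_cases hQa : Q a
    · have hzero : (L.map fun r => if Q r then 1 else 0).sum = 0 :=
        List.sum_eq_zero fun _ hv => by
          obtain ⟨r, hr, rfl⟩ := List.mem_map.mp hv
          simp [show ¬ Q r from fun hQr => ha r hr ⟨hQa, hQr⟩]
      simp [hQa, hzero]
    · simpa [hQa] using sum_map_ite_le_one hL

lemma RootStep.lt {a b : ℕ × ℕ} (h : RootStep a b) : a < b := by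
  rcases h with rfl | rfl <;> simp [Prod.lt_iff]

def hookPoint (c q k : ℕ) : ℕ × ℕ := if k < q then (c, k) else (c + k - q, q)

/-- `hook c p q` lists `(c, c), …, (c, q - 1)` along row `c`, then `(c, q), …, (p - 1, q)` down
column `q`: the Dyck path from `α_c` to the corner `(p, q)`, the corner itself excluded. -/
def hook (c p q : ℕ) : List (ℕ × ℕ) := (List.range' c (q - c + (p - c))).map (hookPoint c q)

lemma hook_append_corner {c p q : ℕ} (hcp : c ≤ p) (hpq : p ≤ q) :
    hook c p q ++ [(p, q)] = (List.range' c (q - c + (p - c) + 1)).map (hookPoint c q) := by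
  rw [List.range'_concat, List.map_append, hook]
  simp only [List.map_cons, List.map_nil, hookPoint]
  rw [if_neg (by omega)]
  congr 3
  omega

lemma isChain_hook_append_corner {c p q : ℕ} (hcp : c ≤ p) (hpq : p ≤ q) :
    (hook c p q ++ [(p, q)]).IsChain RootStep := by
  rw [hook_append_corner hcp hpq, List.isChain_map]
  refine (List.isChain_range' c _ 1).imp fun k l hkl => ?_
  subst hkl
  unfold hookPoint RootStep
  split_ifs <;> dsimp only <;> simp only [Prod.mk.injEq, true_or, and_true] <;> omega

lemma mem_hook {c p q : ℕ} {r : ℕ × ℕ} (hcp : c ≤ p) (hpq : p ≤ q) :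
    r ∈ hook c p q ↔ r.1 = c ∧ c ≤ r.2 ∧ r.2 < q ∨ r.2 = q ∧ c ≤ r.1 ∧ r.1 < p := by
  simp only [hook, List.mem_map, List.mem_range'_1, hookPoint]
  constructor
  · rintro ⟨k, hk, rfl⟩
    split_ifs <;> dsimp only <;> omega
  · rintro (⟨h1, h2, h3⟩ | ⟨h1, h2, h3⟩)
    · exact ⟨r.2, by omega, by rw [if_pos h3, ← h1]⟩
    · refine ⟨r.1 - c + q, by omega, ?_⟩
      rw [if_neg (by omega), ← h1]
      exact Prod.ext (by dsimp only; omega) rfl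

lemma head!_hook_append {c p q : ℕ} {S : List (ℕ × ℕ)} (hcp : c ≤ p) (hpq : p ≤ q) :
    (hook c p q ++ (p, q) :: S).head! = (c, c) := by
  rw [← List.singleton_append, ← List.append_assoc, hook_append_corner hcp hpq, List.range'_succ]
  simp only [List.map_cons, hookPoint, List.cons_append, List.head!_cons, ite_eq_left_iff, not_lt,
    Prod.mk.injEq]
  omega

namespace IsDyckPath

variable {n : ℕ} {L : List (ℕ × ℕ)}

lemma pairwise_lt (hL : IsDyckPath n L) : L.Pairwise (· < ·) :=
  List.isChain_iff_pairwise.mp (hL.2.2.2.2.imp fun _ _ => RootStep.lt)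

lemma head!_le (hL : IsDyckPath n L) {r : ℕ × ℕ} (hr : r ∈ L) : L.head! ≤ r := by
  obtain ⟨a, l, rfl⟩ := List.exists_cons_of_ne_nil hL.1
  rcases List.mem_cons.mp hr with rfl | hr
  · exact le_rfl
  · exact ((List.pairwise_cons.mp hL.pairwise_lt).1 r hr).le

lemma le_getLast! (hL : IsDyckPath n L) {r : ℕ × ℕ} (hr : r ∈ L) : r ≤ L.getLast! := by
  obtain ⟨l, z, rfl⟩ := (List.eq_nil_or_concat' L).resolve_left hL.1
  rw [List.getLast!_of_getLast? (List.getLast?_concat)]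
  rcases List.mem_append.mp hr with hr | hr
  · exact ((List.pairwise_append.mp hL.pairwise_lt).2.2 r hr z (by simp)).le
  · simp_all

lemma mem_Icc_of_mem {i : ℕ} (hL : IsDyckPath n L) {r : ℕ × ℕ} (hr : r ∈ L)
    (h1 : r.1 ≤ i) (h2 : i ≤ r.2) : i ∈ Icc L.head!.1 L.getLast!.1 := by
  rw [mem_Icc, hL.2.2.2.1]
  exact ⟨(hL.head!_le hr).1.trans h1, h2.trans (hL.le_getLast! hr).2⟩

lemma one_le_head! (hL : IsDyckPath n L) : 1 ≤ L.head!.1 := by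
  obtain ⟨a, l, rfl⟩ := List.exists_cons_of_ne_nil hL.1
  exact (hL.2.1 a List.mem_cons_self).1

lemma hook_append {P S : List (ℕ × ℕ)} {x : ℕ × ℕ} {c : ℕ} (hL : IsDyckPath n (P ++ x :: S))
    (hc : 1 ≤ c) (hcx : c ≤ x.1) :
    IsDyckPath n (hook c x.1 x.2 ++ x :: S) := by
  obtain ⟨-, hroots, -, hlast, hchain⟩ := hL
  obtain ⟨-, hxq, hxn⟩ := hroots x (by simp)
  refine ⟨by simp, fun r hr => ?_, ?_, by simpa [List.getLast?_cons] using hlast, ?_⟩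
  · rcases List.mem_append.mp hr with hr | hr
    · rcases (mem_hook hcx hxq).mp hr with ⟨h1, h2, h3⟩ | ⟨h1, h2, h3⟩ <;>
        exact ⟨by omega, by omega, by omega⟩
    · exact hroots r (List.mem_append_right _ hr)
  · rw [head!_hook_append hcx hxq]
  · show List.IsChain _ _
    simpa using (isChain_hook_append_corner hcx hxq).append_overlap hchain.right_of_append
      (List.cons_ne_nil _ _)

end IsDyckPath

lemma IsMultiExp.isRoot_of_ne_zero {n : ℕ} {s : ℕ × ℕ → ℕ} (hs : IsMultiExp n s) {r : ℕ × ℕ}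
    (hr : s r ≠ 0) : IsRoot n r.1 r.2 := by
  by_contra h
  exact hr (hs r.1 r.2 h)

lemma sum_Icc_eq_of_forall_Ico_eq_zero {m : ℕ → ℕ} {i c b : ℕ}
    (hmin : ∀ t ∈ Ico 1 i, m t = 0) (hc : 1 ≤ c) (hci : c ≤ i) :
    ∑ t ∈ Icc c b, m t = ∑ t ∈ Icc i b, m t := by
  refine (sum_subset (fun t ht => ?_) fun t ht hti => hmin t ?_).symm <;>
    simp only [mem_Icc, mem_Ico] at * <;> omega

namespace InS

variable {n : ℕ} {m : ℕ → ℕ} {s : ℕ × ℕ → ℕ}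

lemma sum_hook_add_le (hs : InS n m s) {P S : List (ℕ × ℕ)} {x : ℕ × ℕ} {c : ℕ}
    (hL : IsDyckPath n (P ++ x :: S)) (hc : 1 ≤ c) (hcx : c ≤ x.1) :
    ((hook c x.1 x.2).map s).sum + ((x :: S).map s).sum ≤
      ∑ t ∈ Icc c (P ++ x :: S).getLast!.1, m t := by
  have h := hs.2 _ (hL.hook_append hc hcx)
  rwa [head!_hook_append hcx (hL.2.1 x (by simp)).2.1, List.map_append, List.sum_append,
    show (hook c x.1 x.2 ++ x :: S).getLast! = (P ++ x :: S).getLast! by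
      simp [List.getLast?_cons]] at h

lemma apply_le_sum_Icc (hs : InS n m s) {r : ℕ × ℕ} (hr : IsRoot n r.1 r.2) :
    s r ≤ ∑ t ∈ Icc r.1 r.2, m t := by
  obtain ⟨p, q⟩ := r
  obtain ⟨hp, hpq, hqn⟩ : 1 ≤ p ∧ p ≤ q ∧ q ≤ n := hr
  have hdiag : IsDyckPath n ([] ++ [(q, q)]) :=
    ⟨by simp, by simp only [List.nil_append, List.mem_singleton, forall_eq]; omega, rfl, rfl,
      List.isChain_singleton _⟩
  have h := hs.sum_hook_add_le hdiag hp hpq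
  simp only [List.nil_append, List.map_cons, List.map_nil, List.sum_cons, List.sum_nil,
    add_zero] at h ⊢
  rcases hpq.eq_or_lt with rfl | hlt
  · exact le_of_add_le_right h
  · exact le_trans (List.le_sum_of_mem (List.mem_map_of_mem ((mem_hook hpq le_rfl).mpr
      (Or.inr ⟨rfl, le_rfl, hlt⟩)))) (le_of_add_le_left h)

lemma apply_eq_zero_of_snd_lt (hs : InS n m s) {i : ℕ} (hmin : ∀ t ∈ Ico 1 i, m t = 0)
    {r : ℕ × ℕ} (hr : r.2 < i) : s r = 0 := by
  by_contra h
  have hroot := hs.1.isRoot_of_ne_zero h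
  have := hs.apply_le_sum_Icc hroot
  rw [sum_eq_zero fun t ht => hmin t (by simp only [mem_Icc, mem_Ico] at *; omega)] at this
  omega

lemma eq_zero_of_sum_eq_zero (hs : InS n m s) (h : ∑ t ∈ Icc 1 n, m t = 0) : s = 0 := by
  funext r
  show s r = 0
  by_contra hr
  have hroot := hs.1.isRoot_of_ne_zero hr
  have := (hs.apply_le_sum_Icc hroot).trans
    (sum_le_sum_of_subset (Icc_subset_Icc hroot.1 hroot.2.2))
  omega

end InS

def Straddles (s : ℕ × ℕ → ℕ) (i : ℕ) (r : ℕ × ℕ) : Prop := r.1 ≤ i ∧ i ≤ r.2 ∧ s r ≠ 0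

open Classical in
noncomputable def peel (s : ℕ × ℕ → ℕ) (i : ℕ) (r : ℕ × ℕ) : ℕ :=
  if Minimal (Straddles s i) r then 1 else 0

lemma peel_le (s : ℕ × ℕ → ℕ) (i : ℕ) : peel s i ≤ s := fun r => by
  unfold peel
  split_ifs with h
  · exact Nat.one_le_iff_ne_zero.mpr h.prop.2.2
  · exact Nat.zero_le _

lemma IsMultiExp.inS_peel {n : ℕ} {s : ℕ × ℕ → ℕ} (hs : IsMultiExp n s) (i : ℕ) :
    InS n (fun t => if t = i then 1 else 0) (peel s i) := by
  classical
  refine ⟨fun p q hpq => if_neg fun h => h.prop.2.2 (hs p q hpq), fun L hL => ?_⟩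
  by_cases hy : ∃ y ∈ L, Minimal (Straddles s i) y
  · obtain ⟨y, hyL, hy⟩ := hy
    rw [sum_ite_eq' _ i, if_pos (hL.mem_Icc_of_mem hyL hy.prop.1 hy.prop.2.1)]
    exact sum_map_ite_le_one (hL.pairwise_lt.imp fun hab h => h.2.not_lt h.1.prop hab)
  · push Not at hy
    rw [List.sum_eq_zero fun _ hv => ?_]
    · exact Nat.zero_le _
    obtain ⟨r, hr, rfl⟩ := List.mem_map.mp hv
    exact if_neg (hy r hr)

namespace InS

variable {n : ℕ} {m : ℕ → ℕ} {s : ℕ × ℕ → ℕ} {i : ℕ}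

lemma apply_eq_zero_of_not_straddles (hs : InS n m s) (hmin : ∀ t ∈ Ico 1 i, m t = 0)
    {r : ℕ × ℕ} (hr1 : r.1 ≤ i) (hr : ¬ Straddles s i r) : s r = 0 := by
  by_contra h
  by_cases h2 : r.2 < i
  · exact h (hs.apply_eq_zero_of_snd_lt hmin h2)
  · exact hr ⟨hr1, by omega, h⟩

lemma sum_add_one_le_of_exists_straddles (hs : InS n m s) (hmin : ∀ t ∈ Ico 1 i, m t = 0)
    {L : List (ℕ × ℕ)} (hL : IsDyckPath n L) (hai : L.head!.1 ≤ i)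
    (hB : ∃ x ∈ L, Straddles s i x) (hmiss : ∀ r ∈ L, ¬ Minimal (Straddles s i) r) :
    (L.map s).sum + 1 ≤ ∑ t ∈ Icc L.head!.1 L.getLast!.1, m t := by
  classical
  obtain ⟨P, x, S, rfl, hx, hP⟩ := List.exists_eq_append_cons_of_exists hB
  obtain ⟨y, hyx, hy⟩ := (not_minimal_iff_exists_lt hx).mp (hmiss x (by simp))
  have hPzero : (P.map s).sum = 0 := List.sum_eq_zero_iff.mpr <| List.forall_mem_map.mpr
    fun r hr => hs.apply_eq_zero_of_not_straddles hmin
      (((List.pairwise_append.mp hL.pairwise_lt).2.2 r hr x (by simp)).le.1.trans hx.1) (hP r hr)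
  have hy1 : 1 ≤ y.1 := (hs.1.isRoot_of_ne_zero hy.2.2).1
  have hyhook : y ∈ hook y.1 x.1 x.2 := by
    have := (hs.1.isRoot_of_ne_zero hy.2.2).2.1
    rw [mem_hook hyx.le.1 (hL.2.1 x (by simp)).2.1]
    rcases Prod.lt_iff.mp hyx with h | h <;> omega
  calc ((P ++ x :: S).map s).sum + 1 ≤ s y + ((x :: S).map s).sum := by
        rw [List.map_append, List.sum_append, hPzero]
        have := hy.2.2
        omega
    _ ≤ ((hook y.1 x.1 x.2).map s).sum + ((x :: S).map s).sum :=
        Nat.add_le_add_right (List.le_sum_of_mem (List.mem_map_of_mem hyhook)) _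
    _ ≤ ∑ t ∈ Icc y.1 (P ++ x :: S).getLast!.1, m t := hs.sum_hook_add_le hL hy1 hyx.le.1
    _ = ∑ t ∈ Icc (P ++ x :: S).head!.1 (P ++ x :: S).getLast!.1, m t := by
        rw [sum_Icc_eq_of_forall_Ico_eq_zero hmin hy1 hy.1,
          sum_Icc_eq_of_forall_Ico_eq_zero hmin hL.one_le_head! hai]

lemma sum_add_one_le_of_forall_not_straddles (hs : InS n m s)
    (hmin : ∀ t ∈ Ico 1 i, m t = 0) (him : m i ≠ 0)
    {L : List (ℕ × ℕ)} (hL : IsDyckPath n L) (hi : i ∈ Icc L.head!.1 L.getLast!.1)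
    (hB : ∀ r ∈ L, ¬ Straddles s i r) :
    (L.map s).sum + 1 ≤ ∑ t ∈ Icc L.head!.1 L.getLast!.1, m t := by
  classical
  rw [mem_Icc] at hi
  have hsplit : ∑ t ∈ Icc L.head!.1 L.getLast!.1, m t =
      m i + ∑ t ∈ Icc (i + 1) L.getLast!.1, m t := by
    rw [sum_Icc_eq_of_forall_Ico_eq_zero hmin hL.one_le_head! hi.1, Icc_add_one_left_eq_Ioc,
      add_sum_Ioc_eq_sum_Icc hi.2]
  have hzero : ∀ r ∈ L, r.1 ≤ i → s r = 0 := fun r hr hr1 =>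
    hs.apply_eq_zero_of_not_straddles hmin hr1 (hB r hr)
  rw [hsplit]
  by_cases hw : ∃ w ∈ L, i < w.1
  · obtain ⟨P, w, T, rfl, hw, hP⟩ := List.exists_eq_append_cons_of_exists hw
    have hPzero : (P.map s).sum = 0 := List.sum_eq_zero_iff.mpr <| List.forall_mem_map.mpr
      fun r hr => hzero r (by simp [hr]) (not_lt.mp (hP r hr))
    have := hs.sum_hook_add_le hL (by omega : 1 ≤ i + 1) hw
    rw [List.map_append, List.sum_append, hPzero]
    omega
  · push Not at hw
    rw [List.sum_eq_zero_iff.mpr <| List.forall_mem_map.mpr fun r hr => hzero r hr (hw r hr)]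
    omega

lemma sum_add_one_le_of_forall_not_minimal (hs : InS n m s)
    (hmin : ∀ t ∈ Ico 1 i, m t = 0) (him : m i ≠ 0)
    {L : List (ℕ × ℕ)} (hL : IsDyckPath n L) (hi : i ∈ Icc L.head!.1 L.getLast!.1)
    (hmiss : ∀ r ∈ L, ¬ Minimal (Straddles s i) r) :
    (L.map s).sum + 1 ≤ ∑ t ∈ Icc L.head!.1 L.getLast!.1, m t := by
  by_cases hB : ∃ x ∈ L, Straddles s i x
  · exact hs.sum_add_one_le_of_exists_straddles hmin hL (mem_Icc.mp hi).1 hB hmiss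
  · push Not at hB
    exact hs.sum_add_one_le_of_forall_not_straddles hmin him hL hi hB

lemma sub_peel (hs : InS n m s) (hmin : ∀ t ∈ Ico 1 i, m t = 0) (him : m i ≠ 0) :
    InS n (Function.update m i (m i - 1)) (s - peel s i) := by
  classical
  refine ⟨fun p q hpq => by simp [hs.1 p q hpq], fun L hL => ?_⟩
  have hsum : (L.map (s - peel s i)).sum + (L.map (peel s i)).sum = (L.map s).sum := by
    rw [← List.sum_map_add]
    simp only [Pi.sub_apply, Nat.sub_add_cancel (peel_le s i _)]
  have hbound := hs.2 L hL
  by_cases hi : i ∈ Icc L.head!.1 L.getLast!.1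
  · rw [← add_sum_erase _ _ hi] at hbound
    rw [sum_update_of_mem hi, sdiff_singleton_eq_erase]
    by_cases hy : ∃ y ∈ L, Minimal (Straddles s i) y
    · obtain ⟨y, hyL, hy⟩ := hy
      have : 1 ≤ (L.map (peel s i)).sum := by
        simpa [peel, hy] using List.le_sum_of_mem (List.mem_map_of_mem (f := peel s i) hyL)
      omega
    · push Not at hy
      have := hs.sum_add_one_le_of_forall_not_minimal hmin him hL hi hy
      rw [← add_sum_erase _ _ hi] at this
      omega
  · rw [sum_update_of_notMem hi]
    omega

end InS

def IsFundamentalDecomposition (n : ℕ) (m : ℕ → ℕ) (s : ℕ × ℕ → ℕ)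
    (c : ℕ → ℕ → ℕ × ℕ → ℕ) : Prop :=
  (∀ i j : ℕ, 1 ≤ i → i ≤ n → j < m i → InS n (fun t => if t = i then 1 else 0) (c i j)) ∧
  ∀ a : ℕ × ℕ, s a = ∑ i ∈ Icc 1 n, ∑ j ∈ range (m i), c i j a

lemma IsFundamentalDecomposition.of_sum_eq_zero {n : ℕ} {m : ℕ → ℕ} {s : ℕ × ℕ → ℕ}
    (hs : InS n m s) (h : ∑ t ∈ Icc 1 n, m t = 0) : IsFundamentalDecomposition n m s 0 := by
  refine ⟨fun i j hi hin hj => ?_, fun a => by simp [hs.eq_zero_of_sum_eq_zero h]⟩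
  have := sum_eq_zero_iff.mp h i (mem_Icc.mpr ⟨hi, hin⟩)
  omega

lemma IsFundamentalDecomposition.extend {n : ℕ} {m : ℕ → ℕ} {s t : ℕ × ℕ → ℕ}
    {c : ℕ → ℕ → ℕ × ℕ → ℕ} {i : ℕ}
    (hc : IsFundamentalDecomposition n (Function.update m i (m i - 1)) s c)
    (hi : i ∈ Icc 1 n) (him : m i ≠ 0) (ht : InS n (fun t => if t = i then 1 else 0) t) :
    IsFundamentalDecomposition n m (s + t)
      (Function.update c i (Function.update (c i) (m i - 1) t)) := by
  obtain ⟨k, hk⟩ := Nat.exists_eq_succ_of_ne_zero him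
  constructor
  · intro i' j hi' hi'n hj
    rcases eq_or_ne i' i with rfl | hii
    · rcases eq_or_ne j k with rfl | hjk
      · simpa [hk] using ht
      · simpa [hk, hjk] using hc.1 i' j hi' hi'n (by rw [Function.update_self]; omega)
    · simpa [hii] using hc.1 i' j hi' hi'n (by simpa [hii] using hj)
  · intro a
    have hinner : ∀ i', ∑ j ∈ range (m i'),
          Function.update c i (Function.update (c i) (m i - 1) t) i' j a =
        ∑ j ∈ range (Function.update m i (m i - 1) i'), c i' j a + if i' = i then t a else 0 := by
      intro i'
      rcases eq_or_ne i' i with rfl | hii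
      · rw [hk, sum_range_succ]
        simpa using sum_congr rfl fun j hj => by rw [Function.update_of_ne (mem_range.mp hj).ne]
      · simp [hii]
    simp_rw [Pi.add_apply, hc.2 a, hinner, sum_add_distrib, sum_ite_eq', if_pos hi]

lemma exists_first_ne_zero {n : ℕ} {m : ℕ → ℕ} (h : ∑ t ∈ Icc 1 n, m t ≠ 0) :
    ∃ i ∈ Icc 1 n, m i ≠ 0 ∧ ∀ t ∈ Ico 1 i, m t = 0 := by
  classical
  have hex : ∃ i, i ∈ Icc 1 n ∧ m i ≠ 0 := exists_ne_zero_of_sum_ne_zero h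
  refine ⟨Nat.find hex, (Nat.find_spec hex).1, (Nat.find_spec hex).2, fun t ht => ?_⟩
  have hi := mem_Icc.mp (Nat.find_spec hex).1
  rw [mem_Ico] at ht
  by_contra hmt
  exact Nat.find_min hex ht.2 ⟨mem_Icc.mpr ⟨ht.1, by omega⟩, hmt⟩

/-- Every element `s` of `S(λ)`, for `λ = Σ_i k_i ω_i`
(here `k_i = m i`), decomposes as a sum `s = Σ_{i=1}^n Σ_{j=1}^{k_i} m_{i,j}`
with each `m_{i,j} ∈ S(ω_i)`: the integral Minkowski sum property with
respect to fundamental weights. -/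
theorem InS_minkowski_decomposition (n : ℕ) (m : ℕ → ℕ) (s : ℕ × ℕ → ℕ)
    (hs : InS n m s) :
    ∃ c : ℕ → ℕ → (ℕ × ℕ → ℕ),
      (∀ i j : ℕ, 1 ≤ i → i ≤ n → j < m i →
        InS n (fun t => if t = i then 1 else 0) (c i j)) ∧
      (∀ a : ℕ × ℕ, s a = ∑ i ∈ Finset.Icc 1 n, ∑ j ∈ Finset.range (m i), c i j a) := by
  induction hN : ∑ t ∈ Icc 1 n, m t generalizing m s with
  | zero => exact ⟨0, IsFundamentalDecomposition.of_sum_eq_zero hs hN⟩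
  | succ N ih =>
    obtain ⟨i, hi, him, hmin⟩ := exists_first_ne_zero (by rw [hN]; exact N.succ_ne_zero)
    have hsum : ∑ t ∈ Icc 1 n, Function.update m i (m i - 1) t = N := by
      have := add_sum_erase _ m hi
      rw [sum_update_of_mem hi, sdiff_singleton_eq_erase]
      omega
    obtain ⟨c, hc⟩ : ∃ c, IsFundamentalDecomposition n _ _ c :=
      ih _ _ (hs.sub_peel hmin him) hsum
    have h := hc.extend hi him (hs.1.inS_peel i)
    rw [tsub_add_cancel_of_le (peel_le s i)] at h
    exact ⟨_, h⟩
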